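/- arXiv:1703.05538 — 2 statements merged into one kernel-verified Lean document; each statement's English description precedes it below -/
import Mathlib

section
/- For every N > 0 and all real numbers r, s ≥ 0, one has |F_N(r) − F_N(s)| ≤ (1/N) · F_N(r) · F_N(s) · |r − s|, where F_N(r) = min(1, N/r) for r > 0 and F_N(0) = 1. -/
/-- The cutoff function of the globally modified Navier-Stokes equations:
`F_N(r) = min(1, N/r)` for `r > 0`, and `F_N(0) = 1`. -/
noncomputable def FN (N r : ℝ) : ℝ := if r = 0 then 1 else min 1 (N / r)

/-!
On `[0, ∞)` the cutoff is `F_N(r) = N / max(r, N)`. Hence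
`F_N(r) - F_N(s) = (1/N) F_N(r) F_N(s) (max(s, N) - max(r, N))`, and the claim follows because
`max(·, N)` is 1-Lipschitz.
-/

lemma FN_eq_div_max {N r : ℝ} (hN : 0 < N) (hr : 0 ≤ r) : FN N r = N / max r N := by
  rcases le_total r N with hrN | hNr
  · rw [max_eq_right hrN, div_self hN.ne']
    rcases hr.eq_or_lt with rfl | hr
    · simp [FN]
    · simpa [FN, hr.ne', one_le_div hr] using hrN
  · have hr : 0 < r := hN.trans_le hNr
    rw [max_eq_left hNr]
    simpa [FN, hr.ne', div_le_one hr] using hNr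

lemma FN_sub_FN {N r s : ℝ} (hN : 0 < N) (hr : 0 ≤ r) (hs : 0 ≤ s) :
    FN N r - FN N s = (1 / N) * FN N r * FN N s * (max s N - max r N) := by
  have hr' : 0 < max r N := lt_max_of_lt_right hN
  have hs' : 0 < max s N := lt_max_of_lt_right hN
  rw [FN_eq_div_max hN hr, FN_eq_div_max hN hs]
  field_simp

lemma FN_nonneg {N r : ℝ} (hN : 0 < N) (hr : 0 ≤ r) : 0 ≤ FN N r := by
  rw [FN_eq_div_max hN hr]
  positivity

theorem stmt_1 (N : ℝ) (hN : 0 < N) (r s : ℝ) (hr : 0 ≤ r) (hs : 0 ≤ s) :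
    |FN N r - FN N s| ≤ (1 / N) * FN N r * FN N s * |r - s| := by
  have hcoeff : 0 ≤ (1 / N) * FN N r * FN N s := by
    have := FN_nonneg hN hr
    have := FN_nonneg hN hs
    positivity
  rw [FN_sub_FN hN hr hs, abs_mul, abs_of_nonneg hcoeff, abs_sub_comm r s]
  exact mul_le_mul_of_nonneg_left (abs_max_sub_max_le_abs s r N) hcoeff
end

section
/- Let y : [t₂,∞) → ℝ be nonnegative and absolutely continuous, and g ≥ 0 locally integrable, with y′(t) ≤ g(t) y(t) for a.e. t ≥ t₂. Suppose moreover ∫_{t₂}^{t} y(s) ds ≤ I(t) for all t. Then for all t ≥ t₂, (t − t₂) y(t) ≤ I(t) · exp(∫_{t₂}^t g(s) ds). -/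
/-!
Gronwall's inequality on `[s, t]` gives `y t ≤ y s * exp (∫ s..t, g) ≤ y s * exp (∫ t₂..t, g)`
for every `s ∈ [t₂, t]`, since `g ≥ 0`. Integrating this lower bound for `y s` over `s ∈ [t₂, t]`
yields `(t - t₂) * y t ≤ (∫ t₂..t, y) * exp (∫ t₂..t, g) ≤ I t * exp (∫ t₂..t, g)`.
-/

open MeasureTheory Set Real

/-- `log z` has right derivative `z' / z ≤ g`. -/
theorem le_mul_exp_integral_of_pos_of_deriv_le_mul {z z' g : ℝ → ℝ} {a b : ℝ} (hab : a ≤ b)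
    (hcont : ContinuousOn z (Icc a b)) (hpos : ∀ u ∈ Icc a b, 0 < z u)
    (hderiv : ∀ u ∈ Ioo a b, HasDerivWithinAt z (z' u) (Ioi u) u)
    (hg : IntervalIntegrable g volume a b) (hineq : ∀ u ∈ Ioo a b, z' u ≤ g u * z u) :
    z b ≤ z a * exp (∫ u in a..b, g u) := by
  have hlog : log (z b) - log (z a) ≤ ∫ u in a..b, g u := by
    refine intervalIntegral.sub_le_integral_of_hasDeriv_right_of_le hab
      (g := fun u => log (z u)) (g' := fun u => z' u / z u) ?_ ?_
      ((intervalIntegrable_iff_integrableOn_Icc_of_le hab).1 hg) ?_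
    · exact hcont.log fun u hu => (hpos u hu).ne'
    · exact fun u hu => (hderiv u hu).log (hpos u (Ioo_subset_Icc_self hu)).ne'
    · exact fun u hu => (div_le_iff₀ (hpos u (Ioo_subset_Icc_self hu))).2 (hineq u hu)
  calc z b = exp (log (z b)) := (exp_log (hpos b (right_mem_Icc.2 hab))).symm
    _ ≤ exp (log (z a) + ∫ u in a..b, g u) := exp_le_exp.2 (by linarith)
    _ = z a * exp (∫ u in a..b, g u) := by
      rw [exp_add, exp_log (hpos a (left_mem_Icc.2 hab))]

/-- Apply the positive case to `y + ε` (this is where `g ≥ 0` enters) and let `ε → 0`. -/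
theorem le_mul_exp_integral_of_nonneg_of_deriv_le_mul {y y' g : ℝ → ℝ} {a b : ℝ} (hab : a ≤ b)
    (hcont : ContinuousOn y (Icc a b)) (hy : ∀ u ∈ Icc a b, 0 ≤ y u)
    (hderiv : ∀ u ∈ Ioo a b, HasDerivWithinAt y (y' u) (Ioi u) u)
    (hg_int : IntervalIntegrable g volume a b) (hg : ∀ u ∈ Ioo a b, 0 ≤ g u)
    (hineq : ∀ u ∈ Ioo a b, y' u ≤ g u * y u) :
    y b ≤ y a * exp (∫ u in a..b, g u) := by
  set E := exp (∫ u in a..b, g u)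
  have hE : 0 < E := exp_pos _
  have hshift : ∀ ε > 0, y b + ε ≤ (y a + ε) * E := fun ε hε =>
    le_mul_exp_integral_of_pos_of_deriv_le_mul (z := fun u => y u + ε) hab
      (hcont.add continuousOn_const) (fun u hu => by linarith [hy u hu])
      (fun u hu => (hderiv u hu).add_const ε) hg_int
      (fun u hu => by nlinarith [hineq u hu, hg u hu])
  refine le_of_forall_pos_le_add fun δ hδ => ?_
  calc y b ≤ y b + δ / E := by linarith [div_pos hδ hE]
    _ ≤ (y a + δ / E) * E := hshift _ (div_pos hδ hE)
    _ = y a * E + δ := by rw [add_mul, div_mul_cancel₀ _ hE.ne']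

theorem sub_mul_le_integral_mul_of_le_mul {y : ℝ → ℝ} {a t c : ℝ} (hat : a ≤ t)
    (hy : IntervalIntegrable y volume a t) (h : ∀ s ∈ Icc a t, y t ≤ y s * c) :
    (t - a) * y t ≤ (∫ s in a..t, y s) * c := by
  have := intervalIntegral.integral_mono_on hat intervalIntegrable_const (hy.mul_const c) h
  rwa [intervalIntegral.integral_const, smul_eq_mul, intervalIntegral.integral_mul_const] at this

theorem stmt_8_general (t₂ : ℝ) (y y' g I : ℝ → ℝ)
    (hy_nonneg : ∀ t : ℝ, t₂ ≤ t → 0 ≤ y t)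
    (hg_nonneg : ∀ t : ℝ, t₂ ≤ t → 0 ≤ g t)
    (hg_int : ∀ t : ℝ, t₂ ≤ t → IntervalIntegrable g volume t₂ t)
    (hy_deriv : ∀ t : ℝ, t₂ ≤ t → HasDerivAt y (y' t) t)
    (hineq : ∀ t : ℝ, t₂ ≤ t → y' t ≤ g t * y t)
    (hI : ∀ t : ℝ, t₂ ≤ t → ∫ s in t₂..t, y s ≤ I t) :
    ∀ t : ℝ, t₂ ≤ t →
      (t - t₂) * y t ≤ I t * Real.exp (∫ s in t₂..t, g s) := by
  intro t ht
  have hcont : ContinuousOn y (Icc t₂ t) := fun u hu =>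
    (hy_deriv u hu.1).continuousAt.continuousWithinAt
  have hgronwall : ∀ s ∈ Icc t₂ t, y t ≤ y s * exp (∫ u in t₂..t, g u) := by
    rintro s ⟨hs, hst⟩
    have hg_st : IntervalIntegrable g volume s t :=
      (hg_int t ht).mono_set (by rw [uIcc_of_le hst, uIcc_of_le ht]; exact Icc_subset_Icc hs le_rfl)
    calc y t ≤ y s * exp (∫ u in s..t, g u) :=
          le_mul_exp_integral_of_nonneg_of_deriv_le_mul hst (hcont.mono (Icc_subset_Icc hs le_rfl))
            (fun u hu => hy_nonneg u (hs.trans hu.1))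
            (fun u hu => (hy_deriv u (hs.trans hu.1.le)).hasDerivWithinAt) hg_st
            (fun u hu => hg_nonneg u (hs.trans hu.1.le)) (fun u hu => hineq u (hs.trans hu.1.le))
      _ ≤ y s * exp (∫ u in t₂..t, g u) := by
          gcongr
          · exact hy_nonneg s hs
          · exact intervalIntegral.integral_mono_interval hs hst le_rfl
              (ae_restrict_of_forall_mem measurableSet_Ioc fun u hu => hg_nonneg u hu.1.le)
              (hg_int t ht)
  calc (t - t₂) * y t ≤ (∫ s in t₂..t, y s) * exp (∫ u in t₂..t, g u) :=
        sub_mul_le_integral_mul_of_le_mul ht (hcont.intervalIntegrable_of_Icc ht) hgronwall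
    _ ≤ I t * exp (∫ s in t₂..t, g s) := by gcongr; exact hI t ht

theorem stmt_8 (t₂ : ℝ) (y y' g I : ℝ → ℝ)
    (hy_nonneg : ∀ t : ℝ, t₂ ≤ t → 0 ≤ y t)
    (hg_nonneg : ∀ t : ℝ, t₂ ≤ t → 0 ≤ g t)
    (hg_int : ∀ t : ℝ, t₂ ≤ t → IntervalIntegrable g volume t₂ t)
    (hy_int : ∀ t : ℝ, t₂ ≤ t → IntervalIntegrable y volume t₂ t)
    (hy_deriv : ∀ t : ℝ, t₂ ≤ t → HasDerivAt y (y' t) t)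
    (hineq : ∀ t : ℝ, t₂ ≤ t → y' t ≤ g t * y t)
    (hI : ∀ t : ℝ, t₂ ≤ t → ∫ s in t₂..t, y s ≤ I t) :
    ∀ t : ℝ, t₂ ≤ t →
      (t - t₂) * y t ≤ I t * Real.exp (∫ s in t₂..t, g s) :=
  stmt_8_general t₂ y y' g I hy_nonneg hg_nonneg hg_int hy_deriv hineq hI
end
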